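/- Let B be a trimmed finitely ambiguous automaton over alphabet containing letter a. Then B cannot contain a path of the form p →^a p →^{a^k} q →^a q with p ≠ q (i.e., a self-loop on a at p, a path reading a^k from p to q, and a self-loop on a at q). -/

import Mathlib

variable {Q Q' A R : Type*}

/-- `RunFrom Δ p w ρ`: `ρ` is the list of states visited after `p` along a run
reading `w` that starts in `p`. -/
def RunFrom (Δ : Q → A → Q → Prop) : Q → List A → List Q → Prop
  | _, [], [] => True
  | p, a :: w, q :: ρ => Δ p a q ∧ RunFrom Δ q w ρ
  | _, _, _ => False

/-- There is a run from `p` to `q` reading `w`. -/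
def HasRun (Δ : Q → A → Q → Prop) (p : Q) (w : List A) (q : Q) : Prop :=
  ∃ ρ, RunFrom Δ p w ρ ∧ (p :: ρ).getLast (List.cons_ne_nil _ _) = q

/-- `m`-fold power of a word. -/
def wpow (u : List A) (m : ℕ) : List A := (List.replicate m u).flatten

/-- Aperiodicity of a nondeterministic automaton. -/
def Aperiodic (Δ : Q → A → Q → Prop) : Prop :=
  ∃ m, 1 ≤ m ∧ ∀ (p q : Q) (u : List A), u ≠ [] →
    (HasRun Δ p (wpow u m) q ↔ HasRun Δ p (wpow u (m + 1)) q)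

/-- `p` and `q` are in the same strongly connected component. -/
def SameSCC (Δ : Q → A → Q → Prop) (p q : Q) : Prop :=
  p = q ∨ ((∃ u : List A, u ≠ [] ∧ HasRun Δ p u q) ∧ (∃ v : List A, v ≠ [] ∧ HasRun Δ q v p))

/-- The automaton is unambiguous from `p` to `q`. -/
def UnambFromTo (Δ : Q → A → Q → Prop) (p q : Q) : Prop :=
  ∀ (u : List A) (ρ₁ ρ₂ : List Q), u ≠ [] →
    RunFrom Δ p u ρ₁ → RunFrom Δ p u ρ₂ →
    (p :: ρ₁).getLast (List.cons_ne_nil _ _) = q →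
    (p :: ρ₂).getLast (List.cons_ne_nil _ _) = q → ρ₁ = ρ₂

def SCCUnambiguous (Δ : Q → A → Q → Prop) : Prop :=
  ∀ p q : Q, SameSCC Δ p q → UnambFromTo Δ p q

/-- The set of accepting runs on `w`, represented as pairs of an initial state and
the list of subsequently visited states. -/
def AccRuns (Δ : Q → A → Q → Prop) (I F : Set Q) (w : List A) : Set (Q × List Q) :=
  {x | x.1 ∈ I ∧ RunFrom Δ x.1 w x.2 ∧ (x.1 :: x.2).getLast (List.cons_ne_nil _ _) ∈ F}

/-- The sequence of weights along a run. -/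
def wgtSeq (wgt : Q → A → Q → R) : Q → List A → List Q → List R
  | p, a :: w, q :: ρ => wgt p a q :: wgtSeq wgt q w ρ
  | _, _, _ => []

/-! If `p →^a p →^{a^k} q →^a q` with `p ≠ q`, then for every `n` the word `a^(n+k)` has
`n + 1` distinct runs from `p` to `q`: loop `j` times at `p`, follow the path, then loop
`n - j` times at `q`. As the automaton is trimmed, a fixed run from an initial state to `p`
and a fixed run from `q` to a final state turn these into `n + 1` accepting runs of a single
word, so the ambiguity is unbounded. -/

section Runs

variable {Δ : Q → A → Q → Prop}

def runsBetween (Δ : Q → A → Q → Prop) (p : Q) (w : List A) (q : Q) : Set (List Q) :=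
  {ρ | RunFrom Δ p w ρ ∧ (p :: ρ).getLast (List.cons_ne_nil _ _) = q}

theorem RunFrom.length_eq : ∀ {p : Q} {w : List A} {ρ : List Q}, RunFrom Δ p w ρ →
    ρ.length = w.length
  | _, [], [], _ => rfl
  | _, _ :: _, _ :: _, h => by simpa using h.2.length_eq

theorem getLast_cons_append_cons (p : Q) (ρ₁ ρ₂ : List Q) :
    (p :: (ρ₁ ++ ρ₂)).getLast (List.cons_ne_nil _ _) =
      ((p :: ρ₁).getLast (List.cons_ne_nil _ _) :: ρ₂).getLast (List.cons_ne_nil _ _) := by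
  induction ρ₁ generalizing p with
  | nil => rfl
  | cons r ρ₁ ih => simpa using ih r

theorem mem_runsBetween_append {p q r : Q} {u v : List A} {ρ₁ ρ₂ : List Q}
    (h₁ : ρ₁ ∈ runsBetween Δ p u q) (h₂ : ρ₂ ∈ runsBetween Δ q v r) :
    ρ₁ ++ ρ₂ ∈ runsBetween Δ p (u ++ v) r := by
  obtain ⟨hrun₁, rfl⟩ := h₁
  refine ⟨?_, by rw [getLast_cons_append_cons, h₂.2]⟩
  induction u generalizing p ρ₁ with
  | nil =>
    match ρ₁, hrun₁ with
    | [], _ => exact h₂.1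
  | cons b u ih =>
    match ρ₁, hrun₁ with
    | s :: ρ₁, ⟨hstep, hrun₁⟩ => exact ⟨hstep, ih hrun₁ (by simpa using h₂)⟩

theorem replicate_mem_runsBetween {p : Q} {a : A} (hp : Δ p a p) (j : ℕ) :
    List.replicate j p ∈ runsBetween Δ p (List.replicate j a) p := by
  induction j with
  | zero => exact ⟨trivial, rfl⟩
  | succ j ih => exact ⟨⟨hp, ih.1⟩, by simpa [List.replicate_succ] using ih.2⟩

theorem RunFrom.exists_split_of_mem {q : Q} : ∀ {i : Q} {w : List A} {ρ : List Q},
    RunFrom Δ i w ρ → q ∈ i :: ρ → ∃ w₁ w₂ ρ₁ ρ₂, w = w₁ ++ w₂ ∧ ρ = ρ₁ ++ ρ₂ ∧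
      ρ₁ ∈ runsBetween Δ i w₁ q ∧ RunFrom Δ q w₂ ρ₂
  | _, [], [], _, hq => by
    rw [List.mem_singleton.mp hq]
    exact ⟨[], [], [], [], rfl, rfl, ⟨trivial, rfl⟩, trivial⟩
  | _, b :: w, s :: ρ, h, hq => by
    rcases List.mem_cons.mp hq with rfl | hq
    · exact ⟨[], b :: w, [], s :: ρ, rfl, rfl, ⟨trivial, rfl⟩, h⟩
    · obtain ⟨w₁, w₂, ρ₁, ρ₂, rfl, rfl, ⟨hrun₁, hlast⟩, hrun₂⟩ := h.2.exists_split_of_mem hq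
      exact ⟨b :: w₁, w₂, s :: ρ₁, ρ₂, rfl, rfl, ⟨⟨h.1, hrun₁⟩, by simpa using hlast⟩, hrun₂⟩

theorem hasRun_of_mem_accRuns {I F : Set Q} {w : List A} {x : Q × List Q} {q : Q}
    (hx : x ∈ AccRuns Δ I F w) (hq : q ∈ x.1 :: x.2) :
    (∃ i ∈ I, ∃ u, HasRun Δ i u q) ∧ ∃ f ∈ F, ∃ v, HasRun Δ q v f := by
  obtain ⟨i, ρ⟩ := x
  obtain ⟨hi, hrun, hf⟩ := hx
  obtain ⟨w₁, w₂, ρ₁, ρ₂, -, rfl, hρ₁, hρ₂⟩ := hrun.exists_split_of_mem hq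
  rw [getLast_cons_append_cons, hρ₁.2] at hf
  exact ⟨⟨i, hi, w₁, ρ₁, hρ₁⟩, ⟨_, hf, w₂, ρ₂, hρ₂, rfl⟩⟩

theorem runsBetween_finite [Finite Q] (p : Q) (w : List A) (q : Q) :
    (runsBetween Δ p w q).Finite :=
  (List.finite_length_eq Q w.length).subset fun _ hρ ↦ hρ.1.length_eq

theorem accRuns_finite [Finite Q] (I F : Set Q) (w : List A) : (AccRuns Δ I F w).Finite :=
  (Set.finite_univ.prod (List.finite_length_eq Q w.length)).subset
    fun _ hx ↦ ⟨trivial, hx.2.1.length_eq⟩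

theorem ncard_runsBetween_le_ncard_accRuns [Finite Q] {I F : Set Q} {i p q f : Q}
    {u v : List A} (hi : i ∈ I) (hf : f ∈ F) (hu : HasRun Δ i u p) (hv : HasRun Δ q v f)
    (w : List A) :
    (runsBetween Δ p w q).ncard ≤ (AccRuns Δ I F (u ++ (w ++ v))).ncard := by
  obtain ⟨σ, hσ⟩ := hu
  obtain ⟨τ, hτ⟩ := hv
  refine Set.ncard_le_ncard_of_injOn (fun ρ ↦ (i, σ ++ (ρ ++ τ))) (fun ρ hρ ↦ ?_)
    (fun ρ _ ρ' _ h ↦ ?_) (accRuns_finite I F _)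
  · obtain ⟨hrun, hlast⟩ := mem_runsBetween_append hσ (mem_runsBetween_append hρ hτ)
    exact ⟨hi, hrun, hlast ▸ hf⟩
  · simpa using h

theorem ncard_runsBetween_le_of_trim [Finite Q] {I F : Set Q}
    (htrim : ∀ q : Q, ∃ (w : List A) (x : Q × List Q), x ∈ AccRuns Δ I F w ∧ q ∈ x.1 :: x.2)
    {K : ℕ} (hK : ∀ w : List A, (AccRuns Δ I F w).ncard ≤ K) (p : Q) (w : List A) (q : Q) :
    (runsBetween Δ p w q).ncard ≤ K := by
  obtain ⟨_, _, hxp, hp⟩ := htrim p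
  obtain ⟨_, _, hxq, hq⟩ := htrim q
  obtain ⟨⟨i, hi, u, hu⟩, -⟩ := hasRun_of_mem_accRuns hxp hp
  obtain ⟨-, f, hf, v, hv⟩ := hasRun_of_mem_accRuns hxq hq
  exact (ncard_runsBetween_le_ncard_accRuns hi hf hu hv w).trans (hK _)

theorem le_ncard_runsBetween_replicate [Finite Q] {p q : Q} (hpq : p ≠ q)
    {a : A} (hp : Δ p a p) (hq : Δ q a q) {k : ℕ} (hpath : HasRun Δ p (List.replicate k a) q)
    (n : ℕ) : n + 1 ≤ (runsBetween Δ p (List.replicate (n + k) a) q).ncard := by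
  classical
  obtain ⟨ρ, hρ⟩ := hpath
  have hmem : ∀ j ∈ Set.Iic n, List.replicate j p ++ (ρ ++ List.replicate (n - j) q) ∈
      runsBetween Δ p (List.replicate (n + k) a) q := fun j hj ↦ by
    have hword : List.replicate (n + k) a =
        List.replicate j a ++ (List.replicate k a ++ List.replicate (n - j) a) := by
      rw [← List.replicate_add, ← List.replicate_add]
      congr 1
      grind
    rw [hword]
    exact mem_runsBetween_append (replicate_mem_runsBetween hp j)
      (mem_runsBetween_append hρ (replicate_mem_runsBetween hq _))
  -- the number of loops taken at `p` is the number of extra visits of `p`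
  have hinj : Set.InjOn (fun j ↦ List.replicate j p ++ (ρ ++ List.replicate (n - j) q))
      (Set.Iic n) := fun j _ j' _ h ↦ by
    simpa [List.count_replicate, hpq.symm] using congrArg (List.count p) h
  simpa using Set.ncard_le_ncard_of_injOn _ hmem hinj (runsBetween_finite _ _ _)

end Runs

/-- A trimmed finitely ambiguous automaton cannot contain a path
`p →^a p →^{a^k} q →^a q` with `p ≠ q`. -/
theorem no_double_a_loop [Fintype Q] (Δ : Q → A → Q → Prop) (I F : Set Q)
    (htrim : ∀ q : Q, ∃ (w : List A) (x : Q × List Q),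
      x ∈ AccRuns Δ I F w ∧ q ∈ x.1 :: x.2)
    (hfin : ∃ K : ℕ, ∀ w : List A, (AccRuns Δ I F w).ncard ≤ K)
    (p q : Q) (hpq : p ≠ q) (a : A) (k : ℕ)
    (hp : Δ p a p) (hpath : HasRun Δ p (List.replicate k a) q) : ¬ Δ q a q := by
  intro hq
  obtain ⟨K, hK⟩ := hfin
  have hlower := le_ncard_runsBetween_replicate hpq hp hq hpath K
  have hupper := ncard_runsBetween_le_of_trim htrim hK p (List.replicate (K + k) a) q
  omega
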